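/- arXiv:2004.05298 — 5 statements merged into one kernel-verified Lean document; each statement's English description precedes it below -/
import Mathlib

section
/- Let R_S : ℝ^d → ℝ be differentiable with β-Lipschitz gradient and bounded below by R_S(x_*). On a probability space with a filtration (𝔉_t), let (y_t) be an adapted sequence of random vectors in ℝ^d with y_0 deterministic, and (g_t) random vectors with g_t measurable with respect to 𝔉_{t+1}, E[g_t | 𝔉_t] = ∇R_S(y_t), and E‖g_t‖² ≤ σ² for all t. Suppose y_{t+1} = y_t − γ·g_t for a fixed learning rate γ > 0 satisfying γ ≤ 1/β. Then for every T ≥ 1, min_{0 ≤ t ≤ T−1} E‖∇R_S(y_t)‖² ≤ (R_S(y_0) − R_S(x_*))/(γT) + β·γ·σ²/2. -/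
open MeasureTheory
open scoped RealInnerProductSpace

/-! Smoothness gives the descent inequality `f (x + u) ≤ f x + ⟪∇f x, u⟫ + β/2 ‖u‖²`. Applied to
the step `u = -γ g_t` and integrated, it yields
`E R(y_{t+1}) ≤ E R(y_t) - γ E‖∇R(y_t)‖² + βγ²σ²/2`: unbiasedness turns `E⟪∇R(y_t), g_t⟫` into
`E⟪E[g_t | 𝔉_t], g_t⟫ = E‖E[g_t | 𝔉_t]‖² = E‖∇R(y_t)‖²`. Summing over `t < T` telescopes, and
`R ≥ R(x_*)` bounds the average, hence the minimum, of `E‖∇R(y_t)‖²`. -/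

section Smooth

variable {E : Type*} [NormedAddCommGroup E] [InnerProductSpace ℝ E] [CompleteSpace E]
  {f : E → ℝ} {β : ℝ}

theorem le_add_inner_gradient_add_sq (hf : Differentiable ℝ f)
    (hsmooth : ∀ x y, ‖gradient f x - gradient f y‖ ≤ β * ‖x - y‖) (x u : E) :
    f (x + u) ≤ f x + ⟪gradient f x, u⟫ + β / 2 * ‖u‖ ^ 2 := by
  set φ : ℝ → ℝ := fun t => f (x + t • u) - t * ⟪gradient f x, u⟫ - β / 2 * t ^ 2 * ‖u‖ ^ 2
  have hφ' : ∀ t, HasDerivAt φ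
      (⟪gradient f (x + t • u) - gradient f x, u⟫ - β * t * ‖u‖ ^ 2) t := by
    intro t
    have hline : HasDerivAt (fun s : ℝ => x + s • u) u t := by
      simpa using ((hasDerivAt_id t).smul_const u).const_add x
    have hfline := (hf (x + t • u)).hasFDerivAt.comp_hasDerivAt t hline
    rw [← inner_gradient_left] at hfline
    refine ((hfline.sub ((hasDerivAt_id t).mul_const ⟪gradient f x, u⟫)).sub
      (((hasDerivAt_pow 2 t).const_mul (β / 2)).mul_const (‖u‖ ^ 2))).congr_deriv ?_
    rw [inner_sub_left]
    simp only [Nat.cast_ofNat]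
    ring
  have hanti : AntitoneOn φ (Set.Icc 0 1) := by
    refine antitoneOn_of_hasDerivWithinAt_nonpos (convex_Icc 0 1)
      (fun t _ => (hφ' t).continuousAt.continuousWithinAt)
      (fun t _ => (hφ' t).hasDerivWithinAt) fun t ht => ?_
    rw [interior_Icc] at ht
    have hlip : ‖gradient f (x + t • u) - gradient f x‖ ≤ β * (t * ‖u‖) := by
      simpa [norm_smul, abs_of_pos ht.1] using hsmooth (x + t • u) x
    have := (real_inner_le_norm _ u).trans (mul_le_mul_of_nonneg_right hlip (norm_nonneg u))
    linarith
  have h01 := hanti (Set.left_mem_Icc.2 zero_le_one) (Set.right_mem_Icc.2 zero_le_one) zero_le_one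
  simp only [φ, zero_smul, add_zero, one_smul, zero_mul, sub_zero, one_mul] at h01
  linarith

theorem integrable_comp_of_bddBelow (hf : Differentiable ℝ f)
    (hsmooth : ∀ x y, ‖gradient f x - gradient f y‖ ≤ β * ‖x - y‖) {c : ℝ} (hlb : ∀ x, c ≤ f x)
    {Ω : Type*} {m0 : MeasurableSpace Ω} {μ : Measure Ω} [IsFiniteMeasure μ] {X : Ω → E}
    (hX : MemLp X 2 μ) : Integrable (fun ω => f (X ω)) μ := by
  refine integrable_of_le_of_le (hf.continuous.comp_aestronglyMeasurable hX.1)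
    (ae_of_all _ fun ω => hlb (X ω)) (ae_of_all _ fun ω => ?_) (integrable_const c)
    (((integrable_const (f 0)).add ((hX.integrable one_le_two).const_inner (gradient f 0))).add
      (((memLp_two_iff_integrable_sq_norm hX.1).mp hX).const_mul (β / 2)))
  simpa using le_add_inner_gradient_add_sq hf hsmooth 0 (X ω)

end Smooth

section Stochastic

variable {Ω E : Type*} [NormedAddCommGroup E] [InnerProductSpace ℝ E]
  {m m0 : MeasurableSpace Ω} {μ : Measure Ω}

theorem integrable_inner_of_memLp_two {v w : Ω → E} (hv : MemLp v 2 μ) (hw : MemLp w 2 μ) :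
    Integrable (fun ω => ⟪v ω, w ω⟫) μ :=
  (L2.integrable_inner (hv.toLp v) (hw.toLp w)).congr <| by
    filter_upwards [hv.coeFn_toLp, hw.coeFn_toLp] with ω h1 h2
    rw [h1, h2]

variable [CompleteSpace E] [IsFiniteMeasure μ]

-- `condExpL2` is the orthogonal projection onto the `m`-measurable subspace of `L²`.
theorem integral_inner_condExp_eq_integral_norm_sq (hm : m ≤ m0) {f : Ω → E}
    (hf : MemLp f 2 μ) : ∫ ω, ⟪μ[f | m] ω, f ω⟫ ∂μ = ∫ ω, ‖μ[f | m] ω‖ ^ 2 ∂μ := by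
  set P : Ω →₂[μ] E := (condExpL2 E ℝ hm (hf.toLp f) : Ω →₂[μ] E)
  have hP : (P : Ω → E) =ᵐ[μ] μ[f | m] := hf.condExpL2_ae_eq_condExp hm
  have hPm : AEStronglyMeasurable[m] (P : Ω → E) μ := aestronglyMeasurable_condExpL2 hm _
  calc ∫ ω, ⟪μ[f | m] ω, f ω⟫ ∂μ = ⟪P, hf.toLp f⟫ := by
        rw [L2.inner_def]
        refine integral_congr_ae ?_
        filter_upwards [hP, hf.coeFn_toLp] with ω h1 h2
        rw [h1, h2]
    _ = ⟪P, P⟫ := by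
        rw [real_inner_comm, ← inner_condExpL2_eq_inner_fun hm _ _ hPm]
    _ = ∫ ω, ‖μ[f | m] ω‖ ^ 2 ∂μ := by
        rw [L2.inner_def]
        refine integral_congr_ae ?_
        filter_upwards [hP] with ω h1
        rw [h1, real_inner_self_eq_norm_sq]

theorem integral_comp_sub_smul_le {f : E → ℝ} {β : ℝ} (hf : Differentiable ℝ f)
    (hsmooth : ∀ x y, ‖gradient f x - gradient f y‖ ≤ β * ‖x - y‖) (hm : m ≤ m0) (γ : ℝ)
    {X G : Ω → E} (hG : MemLp G 2 μ) (hunbiased : μ[G | m] =ᵐ[μ] fun ω => gradient f (X ω))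
    (hfX : Integrable (fun ω => f (X ω)) μ)
    (hfX' : Integrable (fun ω => f (X ω - γ • G ω)) μ) :
    ∫ ω, f (X ω - γ • G ω) ∂μ
      ≤ ∫ ω, f (X ω) ∂μ - γ * ∫ ω, ‖gradient f (X ω)‖ ^ 2 ∂μ
        + β * γ ^ 2 / 2 * ∫ ω, ‖G ω‖ ^ 2 ∂μ := by
  have hgrad : MemLp (fun ω => gradient f (X ω)) 2 μ := (hG.condExp one_le_two).ae_eq hunbiased
  have hinner : ∫ ω, ⟪gradient f (X ω), G ω⟫ ∂μ = ∫ ω, ‖gradient f (X ω)‖ ^ 2 ∂μ := by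
    calc ∫ ω, ⟪gradient f (X ω), G ω⟫ ∂μ = ∫ ω, ⟪μ[G | m] ω, G ω⟫ ∂μ :=
          integral_congr_ae <| by filter_upwards [hunbiased] with ω h using by rw [h]
      _ = ∫ ω, ‖μ[G | m] ω‖ ^ 2 ∂μ := integral_inner_condExp_eq_integral_norm_sq hm hG
      _ = ∫ ω, ‖gradient f (X ω)‖ ^ 2 ∂μ :=
          integral_congr_ae <| by filter_upwards [hunbiased] with ω h using by rw [h]
  have hInner := (integrable_inner_of_memLp_two hgrad hG).const_mul γ
  have hA : Integrable (fun ω => f (X ω) - γ * ⟪gradient f (X ω), G ω⟫) μ := hfX.sub hInner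
  have hG2 := ((memLp_two_iff_integrable_sq_norm hG.1).mp hG).const_mul (β * γ ^ 2 / 2)
  calc ∫ ω, f (X ω - γ • G ω) ∂μ
      ≤ ∫ ω, (f (X ω) - γ * ⟪gradient f (X ω), G ω⟫ + β * γ ^ 2 / 2 * ‖G ω‖ ^ 2) ∂μ := by
        refine integral_mono hfX' (hA.add hG2) fun ω => ?_
        have h := le_add_inner_gradient_add_sq hf hsmooth (X ω) (-(γ • G ω))
        rw [← sub_eq_add_neg, inner_neg_right, real_inner_smul_right, norm_neg, norm_smul,
          Real.norm_eq_abs, mul_pow, sq_abs] at h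
        linarith
    _ = _ := by
        rw [integral_add hA hG2, integral_sub hfX hInner, integral_const_mul, integral_const_mul,
          hinner]

end Stochastic

theorem inf'_range_le_of_le_sub_add {a b : ℕ → ℝ} {γ C m : ℝ} (hγ : 0 < γ)
    (hstep : ∀ t, a (t + 1) ≤ a t - γ * b t + γ * C) {T : ℕ} (hm : m ≤ a T)
    (hT : (Finset.range T).Nonempty) :
    (Finset.range T).inf' hT b ≤ (a 0 - m) / (γ * T) + C := by
  have htelescope : ∀ n, a n + γ * ∑ t ∈ Finset.range n, b t ≤ a 0 + n * (γ * C) := by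
    intro n
    induction n with
    | zero => simp
    | succ n ih =>
      rw [Finset.sum_range_succ, mul_add, Nat.cast_succ]
      linarith [hstep n]
  have hmin : T * (Finset.range T).inf' hT b ≤ ∑ t ∈ Finset.range T, b t := by
    simpa using Finset.card_nsmul_le_sum (Finset.range T) b _ fun t ht => Finset.inf'_le b ht
  have hT0 : (0 : ℝ) < T := Nat.cast_pos.2 (Nat.pos_of_ne_zero (Finset.nonempty_range_iff.1 hT))
  rw [← sub_le_iff_le_add, le_div_iff₀ (by positivity)]
  linarith [htelescope T, mul_le_mul_of_nonneg_left hmin hγ.le]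

/-- convergence of SGD along the reference trajectory. For β-smooth `R_S`
bounded below by `R_S x_*`, an adapted trajectory `y` with deterministic `y 0 = y0`,
unbiased stochastic gradients `g t` (conditionally on the past) with second moment bounded
by σ², and updates `y (t+1) = y t - γ • g t` with `0 < γ ≤ 1/β`, one has
`min_{0 ≤ t < T} E‖∇R_S(y t)‖² ≤ (R_S(y0) - R_S(x_*))/(γT) + βγσ²/2`. -/
theorem sgd_convergence
    {d : ℕ} (RS : EuclideanSpace ℝ (Fin d) → ℝ) (β σ γ : ℝ)
    (xstar y0 : EuclideanSpace ℝ (Fin d))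
    (hβ : 0 < β)
    (hdiff : Differentiable ℝ RS)
    (hsmooth : ∀ x y, ‖gradient RS x - gradient RS y‖ ≤ β * ‖x - y‖)
    (hlb : ∀ x, RS xstar ≤ RS x)
    {Ω : Type*} {m0 : MeasurableSpace Ω} {μ : Measure Ω} [IsProbabilityMeasure μ]
    (ℱ : Filtration ℕ m0)
    (y g : ℕ → Ω → EuclideanSpace ℝ (Fin d))
    (hy0 : ∀ ω, y 0 ω = y0)
    (hgint : ∀ t, Integrable (g t) μ)
    (hgsqint : ∀ t, Integrable (fun ω => ‖g t ω‖ ^ 2) μ)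
    (hunbiased : ∀ t, μ[g t | ℱ t] =ᵐ[μ] fun ω => gradient RS (y t ω))
    (hsecond : ∀ t, ∫ ω, ‖g t ω‖ ^ 2 ∂μ ≤ σ ^ 2)
    (hupdate : ∀ t ω, y (t + 1) ω = y t ω - γ • g t ω)
    (hγ0 : 0 < γ)
    (T : ℕ) (hT : 1 ≤ T) :
    (Finset.range T).inf' (Finset.nonempty_range_iff.mpr (by omega))
        (fun t => ∫ ω, ‖gradient RS (y t ω)‖ ^ 2 ∂μ)
      ≤ (RS y0 - RS xstar) / (γ * T) + β * γ * σ ^ 2 / 2 := by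
  have hg : ∀ t, MemLp (g t) 2 μ := fun t =>
    (memLp_two_iff_integrable_sq_norm (hgint t).1).mpr (hgsqint t)
  have hy : ∀ t, MemLp (y t) 2 μ := by
    intro t
    induction t with
    | zero => simpa [funext hy0] using memLp_const y0
    | succ t ih =>
      rw [show y (t + 1) = y t - γ • g t from funext (hupdate t)]
      exact ih.sub ((hg t).const_smul γ)
  have hRSy : ∀ t, Integrable (fun ω => RS (y t ω)) μ := fun t =>
    integrable_comp_of_bddBelow hdiff hsmooth hlb (hy t)
  have hstep : ∀ t, ∫ ω, RS (y (t + 1) ω) ∂μ ≤ ∫ ω, RS (y t ω) ∂μ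
      - γ * ∫ ω, ‖gradient RS (y t ω)‖ ^ 2 ∂μ + γ * (β * γ * σ ^ 2 / 2) := by
    intro t
    have h := integral_comp_sub_smul_le hdiff hsmooth (ℱ.le t) γ (hg t) (hunbiased t) (hRSy t)
      (by simpa [hupdate t] using hRSy (t + 1))
    simp only [← hupdate t] at h
    linarith [mul_le_mul_of_nonneg_left (hsecond t) (by positivity : 0 ≤ β * γ ^ 2 / 2)]
  have hlbT : RS xstar ≤ ∫ ω, RS (y T ω) ∂μ := by
    simpa using integral_mono (integrable_const _) (hRSy T) fun ω => hlb (y T ω)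
  have h0 : ∫ ω, RS (y 0 ω) ∂μ = RS y0 := by simp [hy0]
  rw [← h0]
  exact inf'_range_le_of_le_sub_add (a := fun t => ∫ ω, RS (y t ω) ∂μ) hγ0 hstep hlbT _
end

section
/- Let E be a real inner product space and f : E → ℝ convex and differentiable with β-Lipschitz gradient. Then for every learning rate γ with 0 ≤ γ ≤ 2/β, the gradient descent map G(x) = x − γ·∇f(x) is 1-Lipschitz (nonexpansive): ‖(x − γ∇f(x)) − (y − γ∇f(y))‖ ≤ ‖x − y‖ for all x, y ∈ E. -/
/-!
Co-coercivity of the gradient (Baillon–Haddad): for convex `β`-smooth `f`,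
`‖∇f x - ∇f y‖² ≤ β ⟪∇f x - ∇f y, x - y⟫`. It comes from evaluating the first-order convexity
inequality at `x` and the descent lemma at `y` at the point `z = y + β⁻¹ (∇f x - ∇f y)`, and then
symmetrising in `x, y`. Expanding `‖(x - y) - γ (∇f x - ∇f y)‖²`, co-coercivity makes the cross
term dominate the quadratic one as soon as `γ β ≤ 2`.
-/

open Set AffineMap
open scoped RealInnerProductSpace

lemma norm_sub_smul_le_norm_of_sq_norm_le_mul_inner {F : Type*} [NormedAddCommGroup F]
    [InnerProductSpace ℝ F] {u d : F} {β γ : ℝ} (hβ : 0 < β) (hud : ‖u‖ ^ 2 ≤ β * ⟪u, d⟫)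
    (hγ0 : 0 ≤ γ) (hγ : γ ≤ 2 / β) : ‖d - γ • u‖ ≤ ‖d‖ := by
  have hγβ : γ * β ≤ 2 := (le_div_iff₀ hβ).1 hγ
  have hinner : 0 ≤ ⟪u, d⟫ := (mul_nonneg_iff_of_pos_left hβ).1 ((sq_nonneg _).trans hud)
  refine sq_le_sq₀ (norm_nonneg _) (norm_nonneg _) |>.1 ?_
  rw [norm_sub_sq_real, norm_smul, Real.norm_of_nonneg hγ0, real_inner_smul_right,
    real_inner_comm]
  nlinarith [mul_le_mul_of_nonneg_left hud (mul_nonneg hγ0 hγ0),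
    mul_le_mul_of_nonneg_right hγβ (mul_nonneg hγ0 hinner)]

section Smooth

variable {E : Type*} [NormedAddCommGroup E] [InnerProductSpace ℝ E] [CompleteSpace E]
  {f : E → ℝ} {β : ℝ}

theorem DifferentiableAt.hasDerivAt_comp_lineMap {x y : E} {t : ℝ}
    (hf : DifferentiableAt ℝ f (lineMap x y t)) :
    HasDerivAt (f ∘ lineMap x y) ⟪gradient f (lineMap x y t), y - x⟫ t := by
  simpa using hf.hasGradientAt.hasFDerivAt.comp_hasDerivAt t hasDerivAt_lineMap

theorem ConvexOn.add_inner_gradient_le (hf : ConvexOn ℝ univ f) {x : E}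
    (hx : DifferentiableAt ℝ f x) (y : E) : f x + ⟪gradient f x, y - x⟫ ≤ f y := by
  have hline : ConvexOn ℝ univ (f ∘ lineMap (k := ℝ) x y) := by
    simpa using hf.comp_affineMap (lineMap (k := ℝ) x y)
  have hslope := hline.le_slope_of_hasDerivAt (mem_univ 0) (mem_univ 1) one_pos
    (DifferentiableAt.hasDerivAt_comp_lineMap (by simpa using hx))
  simp only [slope_def_field, Function.comp_apply, lineMap_apply_zero, lineMap_apply_one,
    sub_zero, div_one] at hslope
  linarith

theorem inner_gradient_lineMap_le
    (hsmooth : ∀ x y, ‖gradient f x - gradient f y‖ ≤ β * ‖x - y‖) (x y : E) {t : ℝ}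
    (ht : 0 ≤ t) :
    ⟪gradient f (lineMap x y t), y - x⟫ ≤ ⟪gradient f x, y - x⟫ + β * t * ‖y - x‖ ^ 2 := by
  have hdist : ‖lineMap x y t - x‖ = t * ‖y - x‖ := by
    rw [lineMap_apply_module', add_sub_cancel_right, norm_smul, Real.norm_of_nonneg ht]
  calc ⟪gradient f (lineMap x y t), y - x⟫
      = ⟪gradient f x, y - x⟫ + ⟪gradient f (lineMap x y t) - gradient f x, y - x⟫ := by
        rw [inner_sub_left]; ring
    _ ≤ ⟪gradient f x, y - x⟫ + ‖gradient f (lineMap x y t) - gradient f x‖ * ‖y - x‖ := by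
        gcongr; exact real_inner_le_norm _ _
    _ ≤ ⟪gradient f x, y - x⟫ + β * (t * ‖y - x‖) * ‖y - x‖ := by
        gcongr; exact hdist ▸ hsmooth _ _
    _ = ⟪gradient f x, y - x⟫ + β * t * ‖y - x‖ ^ 2 := by ring

theorem Differentiable.le_add_inner_gradient_add_mul_sq_norm (hf : Differentiable ℝ f)
    (hsmooth : ∀ x y, ‖gradient f x - gradient f y‖ ≤ β * ‖x - y‖) (x y : E) :
    f y ≤ f x + ⟪gradient f x, y - x⟫ + β / 2 * ‖y - x‖ ^ 2 := by
  set c := ⟪gradient f x, y - x⟫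
  have hφ (t : ℝ) : HasDerivAt (f ∘ lineMap x y) ⟪gradient f (lineMap x y t), y - x⟫ t :=
    (hf _).hasDerivAt_comp_lineMap
  have hB (t : ℝ) : HasDerivAt (fun s => f x + s * c + β / 2 * ‖y - x‖ ^ 2 * s ^ 2)
      (c + β * t * ‖y - x‖ ^ 2) t := by
    have h := (((hasDerivAt_id' t).mul_const c).const_add (f x)).add
      ((hasDerivAt_pow 2 t).const_mul (β / 2 * ‖y - x‖ ^ 2))
    exact h.congr_deriv (by push_cast; ring)
  simpa using image_le_of_deriv_right_le_deriv_boundary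
    (fun t _ => (hφ t).continuousAt.continuousWithinAt) (fun t _ => (hφ t).hasDerivWithinAt)
    (by simp) (fun t _ => (hB t).continuousAt.continuousWithinAt)
    (fun t _ => (hB t).hasDerivWithinAt)
    (fun t ht => inner_gradient_lineMap_le hsmooth x y ht.1) (right_mem_Icc.2 zero_le_one)

theorem ConvexOn.add_inner_gradient_add_sq_norm_sub_le (hconv : ConvexOn ℝ univ f)
    (hf : Differentiable ℝ f) (hsmooth : ∀ x y, ‖gradient f x - gradient f y‖ ≤ β * ‖x - y‖)
    (hβ : 0 < β) (x y : E) :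
    f x + ⟪gradient f x, y - x⟫ + ‖gradient f x - gradient f y‖ ^ 2 / (2 * β) ≤ f y := by
  set w := gradient f x - gradient f y
  -- `z` minimises the quadratic upper bound at `y` of the convex function `f - ⟪∇f x, ·⟫`
  set z := y + β⁻¹ • w
  have hconvex := hconv.add_inner_gradient_le (hf x) z
  have hdescent := hf.le_add_inner_gradient_add_mul_sq_norm hsmooth y z
  rw [show z - x = (y - x) + β⁻¹ • w by simp only [z]; abel, inner_add_right,
    real_inner_smul_right] at hconvex
  rw [show z - y = β⁻¹ • w by simp only [z]; abel, real_inner_smul_right, norm_smul,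
    Real.norm_of_nonneg (inv_nonneg.2 hβ.le)] at hdescent
  have hβw : β⁻¹ * ⟪gradient f x, w⟫ - β⁻¹ * ⟪gradient f y, w⟫ = β⁻¹ * ‖w‖ ^ 2 := by
    rw [← mul_sub, ← inner_sub_left, real_inner_self_eq_norm_sq]
  have hβ2 : β / 2 * (β⁻¹ * ‖w‖) ^ 2 = β⁻¹ * ‖w‖ ^ 2 - ‖w‖ ^ 2 / (2 * β) := by
    field_simp; ring
  linarith

theorem ConvexOn.sq_norm_gradient_sub_le_mul_inner (hconv : ConvexOn ℝ univ f)
    (hf : Differentiable ℝ f) (hsmooth : ∀ x y, ‖gradient f x - gradient f y‖ ≤ β * ‖x - y‖)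
    (hβ : 0 < β) (x y : E) :
    ‖gradient f x - gradient f y‖ ^ 2 ≤ β * ⟪gradient f x - gradient f y, x - y⟫ := by
  have hxy := hconv.add_inner_gradient_add_sq_norm_sub_le hf hsmooth hβ x y
  have hyx := hconv.add_inner_gradient_add_sq_norm_sub_le hf hsmooth hβ y x
  rw [norm_sub_rev] at hyx
  rw [← neg_sub x y, inner_neg_right] at hxy
  have hdiv : ‖gradient f x - gradient f y‖ ^ 2 / β ≤ ⟪gradient f x - gradient f y, x - y⟫ := by
    have halves : ‖gradient f x - gradient f y‖ ^ 2 / β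
        = 2 * (‖gradient f x - gradient f y‖ ^ 2 / (2 * β)) := by
      field_simp
    rw [inner_sub_left]
    linarith
  rwa [div_le_iff₀' hβ] at hdiv

end Smooth

/-- For a convex differentiable `f` with β-Lipschitz gradient on a real inner
product space, the gradient descent map `x ↦ x - γ • ∇f(x)` with `0 ≤ γ ≤ 2/β` is
nonexpansive. -/
theorem gradient_descent_map_nonexpansive
    {E : Type*} [NormedAddCommGroup E] [InnerProductSpace ℝ E] [CompleteSpace E]
    (f : E → ℝ) (β γ : ℝ) (hβ : 0 < β)
    (hconv : ConvexOn ℝ Set.univ f)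
    (hdiff : Differentiable ℝ f)
    (hsmooth : ∀ x y, ‖gradient f x - gradient f y‖ ≤ β * ‖x - y‖)
    (hγ0 : 0 ≤ γ) (hγ : γ ≤ 2 / β) :
    ∀ x y : E, ‖(x - γ • gradient f x) - (y - γ • gradient f y)‖ ≤ ‖x - y‖ := by
  intro x y
  rw [show (x - γ • gradient f x) - (y - γ • gradient f y)
      = (x - y) - γ • (gradient f x - gradient f y) by rw [smul_sub]; abel]
  exact norm_sub_smul_le_norm_of_sq_norm_le_mul_inner hβ
    (hconv.sq_norm_gradient_sub_le_mul_inner hdiff hsmooth hβ x y) hγ0 hγ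
end

section
/- Let α ∈ (0,1), T ≥ 1, and let (a_t)_{0 ≤ t ≤ T}, (b_t)_{0 ≤ t ≤ T}, (e_t)_{0 ≤ t ≤ T−1} be nonnegative reals with a_0 = b_0 = 0, and suppose for all 0 ≤ t ≤ T−1: a_{t+1} ≤ (1−α)·a_t + α·b_{t+1} and b_{t+1} ≤ b_t + e_t. Then a_T ≤ ∑_{t=0}^{T−1} (1 − (1−α)^{T−t})·e_t. -/
/-- the damped recursion lemma. If `a 0 = b 0 = 0`, all quantities nonnegative,
`a (t+1) ≤ (1-α) a t + α b (t+1)` and `b (t+1) ≤ b t + e t` for `t < T`, then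
`a T ≤ ∑_{t<T} (1 - (1-α)^(T-t)) e t`. -/
theorem damped_recursion_bound
    (α : ℝ) (hα0 : 0 < α) (hα1 : α < 1) (T : ℕ) (hT : 1 ≤ T)
    (a b e : ℕ → ℝ)
    (ha_nonneg : ∀ t ≤ T, 0 ≤ a t) (hb_nonneg : ∀ t ≤ T, 0 ≤ b t)
    (he_nonneg : ∀ t ≤ T - 1, 0 ≤ e t)
    (ha0 : a 0 = 0) (hb0 : b 0 = 0)
    (ha : ∀ t < T, a (t + 1) ≤ (1 - α) * a t + α * b (t + 1))
    (hb : ∀ t < T, b (t + 1) ≤ b t + e t) :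
    a T ≤ ∑ t ∈ Finset.range T, (1 - (1 - α) ^ (T - t)) * e t := by
  have hb' : ∀ n, n ≤ T → b n ≤ ∑ t ∈ Finset.range n, e t := by
    intro n
    induction n with
    | zero => intro _; simp [hb0]
    | succ k ih =>
      intro h
      rw [Finset.sum_range_succ]
      have := ih (by omega)
      have := hb k (by omega)
      linarith
  have key : ∀ n, n ≤ T → a n ≤ ∑ t ∈ Finset.range n, (1 - (1 - α) ^ (n - t)) * e t := by
    intro n
    induction n with
    | zero => intro _; simp [ha0]
    | succ k ih =>
      intro h
      have h1 := ha k (by omega)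
      have h2 := hb' (k + 1) h
      have h3 := ih (by omega)
      have hstep : (1 - α) * (∑ t ∈ Finset.range k, (1 - (1 - α) ^ (k - t)) * e t)
          + α * (∑ t ∈ Finset.range (k + 1), e t)
          = ∑ t ∈ Finset.range (k + 1), (1 - (1 - α) ^ (k + 1 - t)) * e t := by
        rw [Finset.sum_range_succ e, Finset.sum_range_succ, Finset.mul_sum, mul_add,
          Finset.mul_sum, ← add_assoc, ← Finset.sum_add_distrib]
        have hk : k + 1 - k = 1 := by omega
        rw [hk, pow_one]
        congr 1
        · apply Finset.sum_congr rfl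
          intro t ht
          have ht' : t < k := Finset.mem_range.mp ht
          have : k + 1 - t = (k - t) + 1 := by omega
          rw [this, pow_succ]
          ring
        · ring
      calc a (k + 1) ≤ (1 - α) * a k + α * b (k + 1) := h1
        _ ≤ (1 - α) * (∑ t ∈ Finset.range k, (1 - (1 - α) ^ (k - t)) * e t)
            + α * (∑ t ∈ Finset.range (k + 1), e t) := by
            gcongr <;> linarith
        _ = _ := hstep
  exact key T le_rfl
end

section
/- If a randomized algorithm A is ε-uniformly stable, then its expected generalization error is bounded by ε: |E_{S,A}[R_S(A(S)) − R(A(S))]| ≤ ε. Precisely: let Z be a measurable space with probability measure μ, let f : ℝ^d × Z → ℝ be a bounded measurable loss, let (Ω, P) be a probability space of algorithmic randomness, and let A : Z^N × Ω → ℝ^d be measurable. Assume that for every i ∈ {1, …, N}, every pair of datasets S, S'' ∈ Z^N that differ only in the i-th entry, and every z ∈ Z, E_ω[f(A(S, ω), z) − f(A(S'', ω), z)] ≤ ε. Then, with S = (z_1, …, z_N) drawn from the product measure μ^N, |E_{S ~ μ^N, ω}[(1/N)·∑_{i=1}^N f(A(S, ω), z_i) − ∫_Z f(A(S, ω), z)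 dμ(z)]| ≤ ε. -/
/-!
Swapping the `i`-th sample of `S ~ μ^N` with an independent fresh sample `z ~ μ` preserves
`μ^N ⊗ μ`, so the expected loss at the training point `S i` equals the expected loss at the fresh
point `z` of the dataset `S` with its `i`-th entry replaced by `z`. Hence the expected
generalization gap is the average over `i` of `E[ℓ(S[i ↦ z], z) - ℓ(S, z)]`, where `ℓ` is the loss
averaged over the algorithm's randomness (Fubini), and each of these terms lies in `[-ε, ε]` by
uniform stability applied in both directions.
-/

open MeasureTheory Function

theorem abs_integral_le_of_forall_abs_le {α : Type*} [MeasurableSpace α] (μ : Measure α)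
    [IsProbabilityMeasure μ] {g : α → ℝ} {C : ℝ} (h : ∀ a, |g a| ≤ C) : |∫ a, g a ∂μ| ≤ C := by
  simpa using norm_integral_le_of_norm_le_const (μ := μ) (f := g) (ae_of_all _ h)

section SwapSample

variable {ι Z : Type*} [DecidableEq ι] [MeasurableSpace Z]

/-- Exchanges the `i`-th sample with the fresh one, `(S, z) ↦ (update S i z, S i)`, realised as the
transposition of the coordinates `none` and `some i` of `Option ι → Z`. -/
def swapSample (i : ι) : ((ι → Z) × Z) ≃ᵐ ((ι → Z) × Z) :=
  (MeasurableEquiv.piOptionEquivProd fun _ => Z).symm.trans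
    ((MeasurableEquiv.piCongrLeft (fun _ => Z) (Equiv.swap none (some i))).trans
      (MeasurableEquiv.piOptionEquivProd fun _ => Z))

theorem swapSample_apply (i : ι) (S : ι → Z) (z : Z) :
    swapSample i (S, z) = (update S i z, S i) := by
  have hsplit (g : Option ι → Z) :
      MeasurableEquiv.piOptionEquivProd (fun _ => Z) g = (fun j => g (some j), g none) := rfl
  have hjoin : (MeasurableEquiv.piOptionEquivProd fun _ => Z).symm (S, z) =
      fun o => Option.elim o z S := by
    ext o; cases o <;> rfl
  have hswap (g : Option ι → Z) :
      MeasurableEquiv.piCongrLeft (fun _ => Z) (Equiv.swap none (some i)) g =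
        g ∘ Equiv.swap none (some i) := by
    ext o; simp [MeasurableEquiv.coe_piCongrLeft, Equiv.piCongrLeft_apply_eq_cast]
  simp only [swapSample, MeasurableEquiv.trans_apply, hjoin, hswap, hsplit, Prod.mk.injEq]
  refine ⟨funext fun j => ?_, by simp⟩
  rcases eq_or_ne j i with rfl | hj
  · simp
  · simp [Equiv.swap_apply_of_ne_of_ne, hj]

variable [Fintype ι]

theorem measurePreserving_swapSample (μ : Measure Z) [SigmaFinite μ] (i : ι) :
    MeasurePreserving (swapSample i) ((Measure.pi fun _ => μ).prod μ)
      ((Measure.pi fun _ => μ).prod μ) := by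
  have hjoin : MeasurePreserving (MeasurableEquiv.piOptionEquivProd fun _ : Option ι => Z).symm
      ((Measure.pi fun _ => μ).prod μ) (Measure.pi fun _ => μ) :=
    ⟨MeasurableEquiv.measurable _, Measure.pi_map_piOptionEquivProd fun _ => μ⟩
  exact hjoin.symm.comp ((measurePreserving_piCongrLeft (fun _ => μ) _).comp hjoin)

theorem integral_apply_eq_integral_update {E : Type*} [NormedAddCommGroup E] [NormedSpace ℝ E]
    (μ : Measure Z) [IsProbabilityMeasure μ] (g : (ι → Z) → Z → E) (i : ι) :
    ∫ S, g S (S i) ∂(Measure.pi fun _ => μ) =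
      ∫ p, g (update p.1 i p.2) p.2 ∂((Measure.pi fun _ => μ).prod μ) := by
  calc ∫ S, g S (S i) ∂(Measure.pi fun _ => μ)
      = ∫ p, g p.1 (p.1 i) ∂((Measure.pi fun _ => μ).prod μ) := by
        simp [integral_fun_fst fun S => g S (S i)]
    _ = ∫ p, g (swapSample i p).1 ((swapSample i p).1 i) ∂((Measure.pi fun _ => μ).prod μ) :=
      ((measurePreserving_swapSample μ i).integral_comp' (fun q => g q.1 (q.1 i))).symm
    _ = ∫ p, g (update p.1 i p.2) p.2 ∂((Measure.pi fun _ => μ).prod μ) := by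
      congr 1 with ⟨S, z⟩
      simp [swapSample_apply]

end SwapSample

section GeneralizationGap

variable {ι Z : Type*} [Fintype ι] [MeasurableSpace Z]

noncomputable def generalizationGap (μ : Measure Z) (ℓ : Z → ℝ) (S : ι → Z) : ℝ :=
  (Fintype.card ι : ℝ)⁻¹ * ∑ i, ℓ (S i) - ∫ z, ℓ z ∂μ

theorem abs_inv_card_mul_sum_le {x : ι → ℝ} {ε : ℝ} [Nonempty ι] (hx : ∀ i, |x i| ≤ ε) :
    |(Fintype.card ι : ℝ)⁻¹ * ∑ i, x i| ≤ ε := by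
  have hcard : (0 : ℝ) < Fintype.card ι := by exact_mod_cast Fintype.card_pos
  calc |(Fintype.card ι : ℝ)⁻¹ * ∑ i, x i|
      ≤ (Fintype.card ι : ℝ)⁻¹ * ∑ i, |x i| := by
        rw [abs_mul, abs_of_pos (inv_pos.2 hcard)]
        gcongr
        exact Finset.abs_sum_le_sum_abs _ _
    _ ≤ (Fintype.card ι : ℝ)⁻¹ * ∑ _i : ι, ε := by gcongr with i; exact hx i
    _ = ε := by simp [field]

theorem integral_generalizationGap {Ω : Type*} [MeasurableSpace Ω] (P : Measure Ω)
    [IsFiniteMeasure P] (μ : Measure Z) [IsFiniteMeasure μ] {h : Ω → Z → ℝ}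
    (hh : Measurable (uncurry h)) {C : ℝ} (hC : ∀ ω z, |h ω z| ≤ C) (S : ι → Z) :
    ∫ ω, generalizationGap μ (h ω) S ∂P = generalizationGap μ (fun z => ∫ ω, h ω z ∂P) S := by
  have hint : Integrable (uncurry h) (P.prod μ) :=
    .of_bound hh.aestronglyMeasurable C (ae_of_all _ fun p => hC p.1 p.2)
  have hint_at (z : Z) : Integrable (fun ω => h ω z) P :=
    .of_bound (hh.comp (measurable_id.prodMk measurable_const)).aestronglyMeasurable C
      (ae_of_all _ fun ω => hC ω z)
  have hint_pop : Integrable (fun ω => ∫ z, h ω z ∂μ) P := hint.integral_prod_left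
  unfold generalizationGap
  rw [integral_sub ((integrable_finsetSum _ fun i _ => hint_at (S i)).const_mul _) hint_pop,
    integral_const_mul, integral_finsetSum _ fun i _ => hint_at (S i), integral_integral_swap hint]

variable [DecidableEq ι]

theorem abs_integral_generalizationGap_le [Nonempty ι] (μ : Measure Z) [IsProbabilityMeasure μ]
    {g : (ι → Z) → Z → ℝ} (hg : Measurable (uncurry g)) {C : ℝ} (hC : ∀ S z, |g S z| ≤ C)
    {ε : ℝ} (hε : ∀ i S z, |g (update S i z) z - g S z| ≤ ε) :
    |∫ S, generalizationGap μ (g S) S ∂(Measure.pi fun _ => μ)| ≤ ε := by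
  set π := Measure.pi fun _ : ι => μ
  have hint : Integrable (fun p : (ι → Z) × Z => g p.1 p.2) (π.prod μ) :=
    .of_bound hg.aestronglyMeasurable C (ae_of_all _ fun p => hC p.1 p.2)
  have hint_diag (i : ι) : Integrable (fun S => g S (S i)) π :=
    .of_bound (hg.comp (measurable_id.prodMk (measurable_pi_apply i))).aestronglyMeasurable C
      (ae_of_all _ fun S => hC S (S i))
  have hint_update (i : ι) : Integrable (fun p : (ι → Z) × Z => g (update p.1 i p.2) p.2)
      (π.prod μ) :=
    .of_bound (hg.comp (measurable_update'.prodMk measurable_snd)).aestronglyMeasurable C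
      (ae_of_all _ fun p => hC _ _)
  have hint_pop : Integrable (fun S => ∫ z, g S z ∂μ) π := hint.integral_prod_left
  have hprod : ∫ p, g p.1 p.2 ∂(π.prod μ) = ∫ S, ∫ z, g S z ∂μ ∂π := integral_prod _ hint
  have hreplace (i : ι) : ∫ S, g S (S i) ∂π - ∫ S, ∫ z, g S z ∂μ ∂π =
      ∫ p, (g (update p.1 i p.2) p.2 - g p.1 p.2) ∂(π.prod μ) := by
    rw [integral_apply_eq_integral_update, ← hprod, integral_sub (hint_update i) hint]
  have hgap : ∫ S, generalizationGap μ (g S) S ∂π =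
      (Fintype.card ι : ℝ)⁻¹ * ∑ i, (∫ S, g S (S i) ∂π - ∫ S, ∫ z, g S z ∂μ ∂π) := by
    unfold generalizationGap
    rw [integral_sub ((integrable_finsetSum _ fun i _ => hint_diag i).const_mul _) hint_pop,
      integral_const_mul, integral_finsetSum _ fun i _ => hint_diag i, Finset.sum_sub_distrib]
    simp [field]
  rw [hgap]
  refine abs_inv_card_mul_sum_le fun i => ?_
  rw [hreplace]
  exact abs_integral_le_of_forall_abs_le _ fun p => hε i p.1 p.2

end GeneralizationGap

/-- uniform stability bounds the expected generalization error. If the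
randomized algorithm `A` is ε-uniformly stable (for datasets differing in one entry), then
`|E_{S ~ μ^N, ω}[R_S(A(S,ω)) - R(A(S,ω))]| ≤ ε`, where `R_S` is the empirical risk and `R`
the population risk of the bounded measurable loss `f`. -/
theorem uniform_stability_generalization
    {d N : ℕ} (hN : 1 ≤ N)
    {Z : Type*} [MeasurableSpace Z] (μ : Measure Z) [IsProbabilityMeasure μ]
    (f : EuclideanSpace ℝ (Fin d) → Z → ℝ)
    (hf_meas : Measurable (Function.uncurry f))
    (C : ℝ) (hf_bdd : ∀ x zz, |f x zz| ≤ C)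
    {Ω : Type*} [MeasurableSpace Ω] (P : Measure Ω) [IsProbabilityMeasure P]
    (A : (Fin N → Z) → Ω → EuclideanSpace ℝ (Fin d))
    (hA_meas : Measurable (Function.uncurry A))
    (ε : ℝ)
    (hstable : ∀ (i : Fin N) (S S'' : Fin N → Z), (∀ j, j ≠ i → S j = S'' j) →
      ∀ zz : Z, ∫ ω, (f (A S ω) zz - f (A S'' ω) zz) ∂P ≤ ε) :
    |∫ S, ∫ ω, ((N : ℝ)⁻¹ * ∑ i : Fin N, f (A S ω) (S i) - ∫ zz, f (A S ω) zz ∂μ) ∂P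
        ∂(Measure.pi fun _ : Fin N => μ)| ≤ ε := by
  have : Nonempty (Fin N) := ⟨⟨0, hN⟩⟩
  have hloss (S : Fin N → Z) : Measurable (uncurry fun ω z => f (A S ω) z) :=
    hf_meas.comp (((hA_meas.comp (measurable_const.prodMk measurable_id)).comp
      measurable_fst).prodMk measurable_snd)
  have hint (S : Fin N → Z) (z : Z) : Integrable (fun ω => f (A S ω) z) P :=
    .of_bound ((hloss S).comp (measurable_id.prodMk measurable_const)).aestronglyMeasurable C
      (ae_of_all _ fun ω => hf_bdd _ _)
  set φ : (Fin N → Z) → Z → ℝ := fun S z => ∫ ω, f (A S ω) z ∂P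
  have hφ_meas : Measurable (uncurry φ) :=
    (hf_meas.comp ((hA_meas.comp (measurable_fst.fst.prodMk measurable_snd)).prodMk
      measurable_fst.snd)).stronglyMeasurable.integral_prod_right'.measurable
  have hφ_bdd (S : Fin N → Z) (z : Z) : |φ S z| ≤ C :=
    abs_integral_le_of_forall_abs_le P fun ω => hf_bdd (A S ω) z
  have hφ_stable (i : Fin N) (S : Fin N → Z) (z : Z) : |φ (update S i z) z - φ S z| ≤ ε := by
    have hsame (j : Fin N) (hj : j ≠ i) : update S i z j = S j := update_of_ne hj z S
    rw [abs_le, neg_le, neg_sub]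
    simp only [φ, ← integral_sub (hint _ z) (hint _ z)]
    exact ⟨hstable i S _ (fun j hj => (hsame j hj).symm) z, hstable i _ S hsame z⟩
  have hgap (S : Fin N → Z) :
      ∫ ω, ((N : ℝ)⁻¹ * ∑ i, f (A S ω) (S i) - ∫ z, f (A S ω) z ∂μ) ∂P =
        generalizationGap μ (φ S) S := by
    simpa [generalizationGap] using
      integral_generalizationGap P μ (hloss S) (fun _ _ => hf_bdd _ _) S
  simp only [hgap]
  exact abs_integral_generalizationGap_le μ hφ_meas hφ_bdd hφ_stable
end

section
/- Let d ≥ 1 and x ∈ ℝ^d, and define the scaled sign scheme R(x) = (‖x‖₁/d)·sign(x), where sign is applied componentwise with sign(0) = 0. Then ‖x − R(x)‖₂² ≤ ‖x‖₂² − ‖x‖₁²/d ≤ (1 − 1/d)·‖x‖₂². -/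
lemma sign_mul_self_eq_abs (r : ℝ) : Real.sign r * r = |r| := by
  rcases lt_trichotomy r 0 with h | h | h
  · rw [Real.sign_of_neg h, abs_of_neg h]; ring
  · simp [h]
  · rw [Real.sign_of_pos h, abs_of_pos h]; ring

lemma sign_sq_le_one (r : ℝ) : Real.sign r ^ 2 ≤ 1 := by
  rcases Real.sign_apply_eq r with h | h | h <;> rw [h] <;> norm_num

/-- contraction property of the scaled sign residual scheme
`R(x) = (‖x‖₁/d) • sign(x)` (componentwise sign, `sign 0 = 0`):
`‖x - R(x)‖₂² ≤ ‖x‖₂² - ‖x‖₁²/d ≤ (1 - 1/d) ‖x‖₂²`. -/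
theorem scaled_sign_scheme_contraction
    (d : ℕ) (hd : 1 ≤ d) (x : Fin d → ℝ) :
    (∑ i, (x i - ((∑ j, |x j|) / d) * Real.sign (x i)) ^ 2)
        ≤ (∑ i, (x i) ^ 2) - (∑ j, |x j|) ^ 2 / d ∧
    (∑ i, (x i) ^ 2) - (∑ j, |x j|) ^ 2 / d ≤ (1 - 1 / (d : ℝ)) * ∑ i, (x i) ^ 2 := by
  have hd0 : (0 : ℝ) < d := by exact_mod_cast hd
  set s : ℝ := ∑ j, |x j| with hs
  have hsnn : 0 ≤ s := Finset.sum_nonneg fun _ _ => abs_nonneg _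
  constructor
  · have key : ∀ i : Fin d, (x i - (s / d) * Real.sign (x i)) ^ 2
        ≤ x i ^ 2 - 2 * (s / d) * |x i| + (s / d) ^ 2 := by
      intro i
      have h1 : Real.sign (x i) * x i = |x i| := sign_mul_self_eq_abs (x i)
      have h2 : Real.sign (x i) ^ 2 ≤ 1 := sign_sq_le_one (x i)
      have hc : (0 : ℝ) ≤ (s / d) ^ 2 := sq_nonneg _
      have h1c : (s / d) * (Real.sign (x i) * x i) = (s / d) * |x i| := by rw [h1]
      nlinarith [mul_nonneg hc (sub_nonneg.mpr h2), h1c]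
    calc (∑ i, (x i - (s / d) * Real.sign (x i)) ^ 2)
        ≤ ∑ i, (x i ^ 2 - 2 * (s / d) * |x i| + (s / d) ^ 2) :=
          Finset.sum_le_sum fun i _ => key i
      _ = (∑ i, x i ^ 2) - 2 * (s / d) * s + d * (s / d) ^ 2 := by
          rw [Finset.sum_add_distrib, Finset.sum_sub_distrib, ← Finset.mul_sum, ← hs]
          simp [Finset.card_univ, mul_comm]
      _ = (∑ i, x i ^ 2) - s ^ 2 / d := by field_simp; ring
  · have h1 : ∑ i, x i ^ 2 ≤ s ^ 2 := by
      have := Finset.sum_sq_le_sq_sum_of_nonneg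
        (s := Finset.univ) (f := fun i => |x i|) (fun i _ => abs_nonneg _)
      simpa [sq_abs] using this
    have key : (∑ i, x i ^ 2) / d ≤ s ^ 2 / d := by gcongr
    have e : (1 - 1 / (d : ℝ)) * ∑ i, x i ^ 2
        = (∑ i, x i ^ 2) - (∑ i, x i ^ 2) / d := by ring
    rw [e]; linarith
end
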